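/- arXiv:2406.07809 — 6 statements merged into one kernel-verified Lean document; each statement's English description precedes it below -/
import Mathlib

section
/- Let α, ρ < 1 with ρ ≠ 1, β ∈ (0,1), and φ(z) = z^{(1-α)/(1-ρ)} on (0,∞). With φ_y(z) = φ((1-β)y + βz) for y > 0, the inequality A_{φ_y}(z) ≤ A_φ(z) holds for all y, z > 0 if and only if ρ ≤ α. (Here A_f(z) = -f''(z)/f'(z).) -/
/-- Arrow–Pratt coefficient of a function. -/
noncomputable def arrowPratt (f : ℝ → ℝ) (z : ℝ) : ℝ :=
  -(deriv (deriv f) z) / deriv f z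

private lemma affDeriv (a b z : ℝ) : HasDerivAt (fun w => a + b * w) b z := by
  simpa using ((hasDerivAt_id z).const_mul b).const_add a

private lemma derivEq (a b e : ℝ) {z : ℝ} (h : 0 < a + b * z) :
    deriv (fun w => (a + b * w) ^ e) =ᶠ[nhds z] fun w => e * b * (a + b * w) ^ (e - 1) := by
  have hopen : IsOpen {w : ℝ | 0 < a + b * w} :=
    isOpen_lt continuous_const (by continuity)
  filter_upwards [hopen.mem_nhds h] with w hw
  have hd : HasDerivAt (fun w => (a + b * w) ^ e)
      (e * (a + b * w) ^ (e - 1) * b) w :=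
    by have := (Real.hasDerivAt_rpow_const (p := e) (Or.inl hw.ne')).comp w (affDeriv a b w); exact this
  rw [hd.deriv]; ring

private lemma arrowPratt_aff (a b e z : ℝ) (he : e ≠ 0) (hb : b ≠ 0)
    (h : 0 < a + b * z) :
    arrowPratt (fun w => (a + b * w) ^ e) z = (1 - e) * b / (a + b * z) := by
  have h1 : deriv (fun w => (a + b * w) ^ e) z = e * b * (a + b * z) ^ (e - 1) :=
    (derivEq a b e h).self_of_nhds
  have h2 : deriv (deriv (fun w => (a + b * w) ^ e)) z
      = deriv (fun w => e * b * (a + b * w) ^ (e - 1)) z :=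
    (derivEq a b e h).deriv_eq
  have hd : HasDerivAt (fun w => e * b * (a + b * w) ^ (e - 1))
      (e * b * ((e - 1) * (a + b * z) ^ (e - 1 - 1) * b)) z := by
    exact (((Real.hasDerivAt_rpow_const (p := e - 1) (Or.inl h.ne')).comp z
      (affDeriv a b z))).const_mul (e * b)
  have h3 : deriv (deriv (fun w => (a + b * w) ^ e)) z
      = e * b * ((e - 1) * (a + b * z) ^ (e - 1 - 1) * b) := by
    rw [h2, hd.deriv]
  rw [arrowPratt, h1, h3]
  have hu : (a + b * z) ≠ 0 := h.ne'
  have key : (a + b * z) ^ (e - 1 - 1) = (a + b * z) ^ (e - 1) / (a + b * z) := by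
    rw [Real.rpow_sub h, Real.rpow_one]
  rw [key]
  have hp : (a + b * z) ^ (e - 1) ≠ 0 := (Real.rpow_pos_of_pos h _).ne'
  field_simp
  ring

/-- For the CRRA Epstein–Zin aggregator `φ(z) = z^((1-α)/(1-ρ))`,
the comparison `A_{φ_y}(z) ≤ A_φ(z)` for all `y, z > 0` holds iff `ρ ≤ α`. -/
theorem crra_early_resolution_iff
    (α ρ β : ℝ) (hα : α < 1) (hρ : ρ < 1) (hβ : β ∈ Set.Ioo (0:ℝ) 1) :
    (∀ y z : ℝ, 0 < y → 0 < z →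
        arrowPratt (fun w => ((1 - β) * y + β * w) ^ ((1 - α) / (1 - ρ))) z ≤
          arrowPratt (fun w => w ^ ((1 - α) / (1 - ρ))) z) ↔ ρ ≤ α := by
  obtain ⟨hβ0, hβ1⟩ := hβ
  set e : ℝ := (1 - α) / (1 - ρ) with he_def
  have hρ' : (0:ℝ) < 1 - ρ := by linarith
  have he : 0 < e := div_pos (by linarith) hρ'
  have heq : ∀ z : ℝ, 0 < z →
      arrowPratt (fun w => w ^ e) z = (1 - e) / z := by
    intro z hz
    have : arrowPratt (fun w => (0 + 1 * w) ^ e) z = (1 - e) * 1 / (0 + 1 * z) := by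
      exact arrowPratt_aff 0 1 e z he.ne' one_ne_zero (by simpa using hz)
    simpa using this
  have hiff : e ≤ 1 ↔ ρ ≤ α := by
    rw [div_le_one hρ']; constructor <;> intro <;> linarith
  constructor
  · intro H
    rw [← hiff]
    have h1 := H 1 1 one_pos one_pos
    rw [heq 1 one_pos,
      arrowPratt_aff ((1 - β) * 1) β e 1 he.ne' hβ0.ne' (by nlinarith)] at h1
    have hβ1' : (1 - β) * 1 + β * 1 = 1 := by ring
    rw [hβ1'] at h1
    simp only [div_one] at h1
    nlinarith
  · intro hρα y z hy hz
    have he1 : e ≤ 1 := hiff.mpr hρα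
    have hu : 0 < (1 - β) * y + β * z := by nlinarith
    rw [heq z hz, arrowPratt_aff ((1 - β) * y) β e z he.ne' hβ0.ne' hu]
    rw [div_le_div_iff₀ hu hz]
    nlinarith [mul_nonneg (mul_nonneg (sub_nonneg.mpr he1)
      (by linarith : (0:ℝ) ≤ 1 - β)) hy.le]
end

section
/- Let α, ρ ∈ (0,1), β ∈ (0,1), and φ(z) = z^{(1-α)/(1-ρ)} on (0,∞). Define ψ_y(z) = φ((1-β)y + β φ^{-1}(z)) for y ≥ 0, z > 0. If ρ ≤ α, then ψ_y'(z) ≤ β^{(1-α)/(1-ρ)} for all y ≥ 0 and z > 0. -/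
/-- CRRA Epstein–Zin contraction bound: with
`ψ_y(z) = ((1-β)y + β z^((1-ρ)/(1-α)))^((1-α)/(1-ρ))`, if `ρ ≤ α` then
`ψ_y'(z) ≤ β^((1-α)/(1-ρ))` for all `y ≥ 0`, `z > 0`. -/
theorem crra_psi_deriv_bound
    (α ρ β : ℝ) (hα : α ∈ Set.Ioo (0:ℝ) 1) (hρ : ρ ∈ Set.Ioo (0:ℝ) 1)
    (hβ : β ∈ Set.Ioo (0:ℝ) 1) (hle : ρ ≤ α) :
    ∀ y z : ℝ, 0 ≤ y → 0 < z →
      deriv (fun w : ℝ =>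
          ((1 - β) * y + β * w ^ ((1 - ρ) / (1 - α))) ^ ((1 - α) / (1 - ρ))) z ≤
        β ^ ((1 - α) / (1 - ρ)) := by
  intro y z hy hz
  obtain ⟨hα0, hα1⟩ := hα
  obtain ⟨hρ0, hρ1⟩ := hρ
  obtain ⟨hβ0, hβ1⟩ := hβ
  set p : ℝ := (1 - ρ) / (1 - α) with hp
  set q : ℝ := (1 - α) / (1 - ρ) with hq
  have h1α : (0:ℝ) < 1 - α := by linarith
  have h1ρ : (0:ℝ) < 1 - ρ := by linarith
  have hp0 : 0 < p := div_pos h1ρ h1α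
  have hq0 : 0 < q := div_pos h1α h1ρ
  have hpq : p * q = 1 := by
    rw [hp, hq, div_mul_div_comm, mul_comm (1 - ρ), div_self (mul_ne_zero h1α.ne' h1ρ.ne')]
  have hc : 0 ≤ (1 - β) * y := mul_nonneg (by linarith) hy
  have hzp : 0 < z ^ p := Real.rpow_pos_of_pos hz p
  have hbase : 0 < (1 - β) * y + β * z ^ p := by positivity
  -- compute derivative
  have hinner : HasDerivAt (fun w : ℝ => (1 - β) * y + β * w ^ p)
      (β * (p * z ^ (p - 1))) z := by
    have := (Real.hasDerivAt_rpow_const (x := z) (p := p) (Or.inl hz.ne')).const_mul β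
    simpa using this.const_add ((1 - β) * y)
  have houter := hinner.rpow_const (p := q) (Or.inl hbase.ne')
  rw [houter.deriv]
  rw [show β * (p * z ^ (p - 1)) * q * ((1 - β) * y + β * z ^ p) ^ (q - 1)
      = ((1 - β) * y + β * z ^ p) ^ (q - 1) * q * (β * (p * z ^ (p - 1))) by ring]
  -- bound
  have hmono : ((1 - β) * y + β * z ^ p) ^ (q - 1) ≤ (β * z ^ p) ^ (q - 1) := by
    have hbz : 0 < β * z ^ p := by positivity
    have hle2 : β * z ^ p ≤ (1 - β) * y + β * z ^ p := by linarith
    exact Real.rpow_le_rpow_of_nonpos hbz hle2 (by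
      have : q ≤ 1 := by
        rw [hq, div_le_one h1ρ]; linarith
      linarith)
  have hcalc : (β * z ^ p) ^ (q - 1) * q * (β * (p * z ^ (p - 1))) = β ^ q := by
    rw [Real.mul_rpow hβ0.le hzp.le]
    rw [← Real.rpow_mul hz.le]
    have e1 : β ^ (q - 1) * β = β ^ q := by
      rw [← Real.rpow_add_one hβ0.ne' (q - 1)]
      norm_num
    have e2 : z ^ (p * (q - 1)) * z ^ (p - 1) = 1 := by
      rw [← Real.rpow_add hz]
      have : p * (q - 1) + (p - 1) = 0 := by
        have : p * q = 1 := hpq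
        nlinarith
      rw [this, Real.rpow_zero]
    calc β ^ (q - 1) * z ^ (p * (q - 1)) * q * (β * (p * z ^ (p - 1)))
        = (β ^ (q - 1) * β) * (z ^ (p * (q - 1)) * z ^ (p - 1)) * (p * q) := by ring
      _ = β ^ q := by rw [e1, e2, hpq]; ring
  calc ((1 - β) * y + β * z ^ p) ^ (q - 1) * q * (β * (p * z ^ (p - 1)))
      ≤ (β * z ^ p) ^ (q - 1) * q * (β * (p * z ^ (p - 1))) := by
        apply mul_le_mul_of_nonneg_right (mul_le_mul_of_nonneg_right hmono hq0.le)
        positivity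
    _ = β ^ q := hcalc
end

section
/- Let α, ρ > 0 with α ≤ ρ, β ∈ (0,1), and φ(z) = α^{-1}(1 - (1 - ρz)^{α/ρ}) for z < ρ^{-1}. Define ψ_y(z) = φ((1-β)y + β φ^{-1}(z)) wherever defined (y < ρ^{-1}, z < α^{-1}). Then ψ_y'(z) ≤ β^{α/ρ} for all such y, z. -/
/-- CARA Epstein–Zin contraction bound: with
`ψ_y(z) = α⁻¹(1 - ((1-β)(1-ρy) + β(1-αz)^(ρ/α))^(α/ρ))`, if `α ≤ ρ` then
`ψ_y'(z) ≤ β^(α/ρ)` for all `y < ρ⁻¹`, `z < α⁻¹`. -/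
theorem cara_psi_deriv_bound
    (α ρ β : ℝ) (hα : 0 < α) (hρ : 0 < ρ) (hle : α ≤ ρ)
    (hβ : β ∈ Set.Ioo (0:ℝ) 1) :
    ∀ y z : ℝ, y < ρ⁻¹ → z < α⁻¹ →
      deriv (fun w : ℝ =>
          α⁻¹ * (1 - ((1 - β) * (1 - ρ * y) + β * (1 - α * w) ^ (ρ / α)) ^ (α / ρ))) z ≤
        β ^ (α / ρ) := by
  obtain ⟨hβ0, hβ1⟩ := hβ
  intro y z hy hz
  have hαz : α * z < 1 := by
    have := mul_lt_mul_of_pos_left hz hα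
    rwa [mul_inv_cancel₀ hα.ne'] at this
  have hu : (0:ℝ) < 1 - α * z := by linarith
  have hρy : ρ * y < 1 := by
    have := mul_lt_mul_of_pos_left hy hρ
    rwa [mul_inv_cancel₀ hρ.ne'] at this
  have hA : (0:ℝ) < (1 - β) * (1 - ρ * y) := by
    apply mul_pos <;> linarith
  have hup : (0:ℝ) < (1 - α * z) ^ (ρ / α) := Real.rpow_pos_of_pos hu _
  have hG : (0:ℝ) < (1 - β) * (1 - ρ * y) + β * (1 - α * z) ^ (ρ / α) := by
    have := mul_pos hβ0 hup; linarith
  -- derivative chain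
  have h1 : HasDerivAt (fun w : ℝ => 1 - α * w) (-α) z := by
    simpa using ((hasDerivAt_id z).const_mul α).const_sub 1
  have h2 := h1.rpow_const (p := ρ / α) (Or.inl hu.ne')
  have h3 := (h2.const_mul β).const_add ((1 - β) * (1 - ρ * y))
  have h4 := h3.rpow_const (p := α / ρ) (Or.inl hG.ne')
  have h5 := (h4.const_sub 1).const_mul α⁻¹
  rw [h5.deriv]
  set u := 1 - α * z with hu_def
  set G := (1 - β) * (1 - ρ * y) + β * u ^ (ρ / α) with hG_def
  have hLHS : α⁻¹ * -(β * (-α * (ρ / α) * u ^ (ρ / α - 1)) * (α / ρ) * G ^ (α / ρ - 1))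
      = β * G ^ (α / ρ - 1) * u ^ (ρ / α - 1) := by
    field_simp
  rw [hLHS]
  have hexp : α / ρ - 1 ≤ 0 := by
    have : α / ρ ≤ 1 := (div_le_one hρ).mpr hle
    linarith
  have hkey : G ^ (α / ρ - 1) ≤ (β * u ^ (ρ / α)) ^ (α / ρ - 1) :=
    Real.rpow_le_rpow_of_nonpos (mul_pos hβ0 hup) (by rw [hG_def]; linarith) hexp
  have hrw : (β * u ^ (ρ / α)) ^ (α / ρ - 1)
      = β ^ (α / ρ - 1) * u ^ (ρ / α * (α / ρ - 1)) := by
    rw [Real.mul_rpow hβ0.le hup.le, ← Real.rpow_mul hu.le]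
  have hfinal : β * (β ^ (α / ρ - 1) * u ^ (ρ / α * (α / ρ - 1))) * u ^ (ρ / α - 1)
      = β ^ (α / ρ) := by
    rw [mul_assoc, mul_assoc, ← Real.rpow_add hu,
      show ρ / α * (α / ρ - 1) + (ρ / α - 1) = 0 by field_simp; ring,
      Real.rpow_zero, mul_one,
      show β * β ^ (α / ρ - 1) = β ^ (1:ℝ) * β ^ (α / ρ - 1) by rw [Real.rpow_one],
      ← Real.rpow_add hβ0]
    norm_num
  calc β * G ^ (α / ρ - 1) * u ^ (ρ / α - 1)
      ≤ β * (β ^ (α / ρ - 1) * u ^ (ρ / α * (α / ρ - 1))) * u ^ (ρ / α - 1) := by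
        rw [← hrw]
        have hupos := (Real.rpow_pos_of_pos hu (ρ / α - 1)).le
        exact mul_le_mul_of_nonneg_right (mul_le_mul_of_nonneg_left hkey hβ0.le) hupos
    _ = β ^ (α / ρ) := hfinal
end

section
/- Let φ : I → ℝ be strictly increasing and twice continuously differentiable with φ' > 0 on an open interval I, β ∈ (0,1), and let ψ_y(z) = φ((1-β)y + β φ^{-1}(z)) with φ_y(z) = φ((1-β)y + βz). Then ψ_y'(z) = φ_y'(z̃)/φ'(z̃) where z̃ = φ^{-1}(z), and ψ_y''(z) = (φ_y'(z̃)/φ'(z̃)^2) · (A_φ(z̃) - A_{φ_y}(z̃)). In particular, ψ_y is convex (resp. concave) in z whenever A_{φ_y} ≤ A_φ (resp. A_{φ_y} ≥ A_φ) throughout. -/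
open Filter Topology


/-- Derivatives of the composed aggregator `ψ_y = φ_y ∘ φ⁻¹`:
`ψ_y'(z) = φ_y'(z̃)/φ'(z̃)` and
`ψ_y''(z) = (φ_y'(z̃)/φ'(z̃)²)·(A_φ(z̃) - A_{φ_y}(z̃))` with `z̃ = φ⁻¹(z)`;
in particular `ψ_y'' ≥ 0` (resp. `≤ 0`) where `A_{φ_y} ≤ A_φ` (resp. `≥`). -/
theorem psi_deriv_formulas
    (a b : ℝ) (φ φinv : ℝ → ℝ) (β y : ℝ) (hβ : β ∈ Set.Ioo (0:ℝ) 1)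
    (hmono : StrictMonoOn φ (Set.Ioo a b))
    (hd1 : ∀ x ∈ Set.Ioo a b, DifferentiableAt ℝ φ x)
    (hd2 : ∀ x ∈ Set.Ioo a b, DifferentiableAt ℝ (deriv φ) x)
    (hcont : ContinuousOn (deriv (deriv φ)) (Set.Ioo a b))
    (hpos : ∀ x ∈ Set.Ioo a b, 0 < deriv φ x)
    (hinv : ∀ x ∈ Set.Ioo a b, φinv (φ x) = x)
    (z : ℝ) (hz : z ∈ φ '' Set.Ioo a b)
    (hw : (1 - β) * y + β * φinv z ∈ Set.Ioo a b) :
    deriv (fun w => φ ((1 - β) * y + β * φinv w)) z =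
        deriv (fun w => φ ((1 - β) * y + β * w)) (φinv z) / deriv φ (φinv z) ∧
    deriv (deriv (fun w => φ ((1 - β) * y + β * φinv w))) z =
        deriv (fun w => φ ((1 - β) * y + β * w)) (φinv z) / (deriv φ (φinv z)) ^ 2 *
          (arrowPratt φ (φinv z) -
            arrowPratt (fun w => φ ((1 - β) * y + β * w)) (φinv z)) ∧
    ((arrowPratt (fun w => φ ((1 - β) * y + β * w)) (φinv z) ≤ arrowPratt φ (φinv z) →
        0 ≤ deriv (deriv (fun w => φ ((1 - β) * y + β * φinv w))) z) ∧
      (arrowPratt φ (φinv z) ≤ arrowPratt (fun w => φ ((1 - β) * y + β * w)) (φinv z) →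
        deriv (deriv (fun w => φ ((1 - β) * y + β * φinv w))) z ≤ 0)) := by
  obtain ⟨hβ0, hβ1⟩ := hβ
  obtain ⟨x₀, hx₀S, hzx₀⟩ := hz
  have hφinvz : φinv z = x₀ := by rw [← hzx₀, hinv x₀ hx₀S]
  subst hφinvz
  set S := Set.Ioo a b with hSdef
  have hSopen : IsOpen S := isOpen_Ioo
  have hstrict : ∀ x ∈ S, HasStrictDerivAt φ (deriv φ x) x := by
    intro x hx
    refine hasStrictDerivAt_of_hasDerivAt_of_continuousAt ?_ (hd2 x hx).continuousAt
    filter_upwards [hSopen.mem_nhds hx] with u hu using (hd1 u hu).hasDerivAt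
  have hne : ∀ x ∈ S, deriv φ x ≠ 0 := fun x hx => (hpos x hx).ne'
  have hFD := (hstrict (φinv z) hx₀S).hasStrictFDerivAt_equiv (hne (φinv z) hx₀S)
  set F := hFD.toOpenPartialHomeomorph φ with hFdef
  have hx₀src : φinv z ∈ F.source := hFD.mem_toOpenPartialHomeomorph_source
  have hztgt : z ∈ F.target := by
    rw [← hzx₀]; exact hFD.image_mem_toOpenPartialHomeomorph_target
  have hFsymm_z : F.symm z = φinv z := by
    have h := F.left_inv hx₀src
    rwa [show (F : ℝ → ℝ) (φinv z) = φ (φinv z) from rfl, hzx₀] at h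
  have hFsymm_cont : ContinuousAt F.symm z := F.continuousAt_symm hztgt
  -- eventual facts near z
  have hP : ∀ᶠ w in 𝓝 z, φinv w = F.symm w ∧ w ∈ F.target ∧ φinv w ∈ S ∧
      (1 - β) * y + β * φinv w ∈ S := by
    have e1 : ∀ᶠ w in 𝓝 z, w ∈ F.target := F.open_target.mem_nhds hztgt
    have e2 : ∀ᶠ w in 𝓝 z, F.symm w ∈ S := by
      have h := hFsymm_cont
      rw [ContinuousAt, hFsymm_z] at h
      exact h (hSopen.mem_nhds hx₀S)
    have e3 : ∀ᶠ w in 𝓝 z, (1 - β) * y + β * F.symm w ∈ S := by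
      have hcnt : ContinuousAt (fun w => (1 - β) * y + β * F.symm w) z :=
        (continuousAt_const.add (continuousAt_const.mul hFsymm_cont))
      rw [ContinuousAt, hFsymm_z] at hcnt
      exact hcnt (hSopen.mem_nhds hw)
    filter_upwards [e1, e2, e3] with w h1 h2 h3
    have hr : φ (F.symm w) = w := F.right_inv h1
    have heq : φinv w = F.symm w := by
      conv_lhs => rw [← hr]
      exact hinv _ h2
    exact ⟨heq, h1, by rw [heq]; exact h2, by rw [heq]; exact h3⟩
  -- derivative of φinv and of ψ, eventually near z
  have hD : ∀ᶠ w in 𝓝 z, HasDerivAt φinv (deriv φ (φinv w))⁻¹ w ∧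
      HasDerivAt (fun u => φ ((1 - β) * y + β * φinv u))
        (deriv φ ((1 - β) * y + β * φinv w) * (β * (deriv φ (φinv w))⁻¹)) w := by
    filter_upwards [hP, hP.eventually_nhds] with w hPw hPnw
    obtain ⟨heq, htgt, hinS, hhS⟩ := hPw
    have hcontw : ContinuousAt φinv w := by
      refine (F.continuousAt_symm htgt).congr ?_
      filter_upwards [hPnw] with u hu using hu.1.symm
    have hinvder : HasDerivAt φinv (deriv φ (φinv w))⁻¹ w := by
      refine HasDerivAt.of_local_left_inverse hcontw ((hd1 _ hinS).hasDerivAt) (hne _ hinS) ?_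
      filter_upwards [hPnw] with u hu
      rw [hu.1]; exact F.right_inv hu.2.1
    have hinner : HasDerivAt (fun u => (1 - β) * y + β * φinv u)
        (β * (deriv φ (φinv w))⁻¹) w :=
      (hinvder.const_mul β).const_add ((1 - β) * y)
    exact ⟨hinvder, ((hd1 _ hhS).hasDerivAt).comp w hinner⟩
  have hψ'eq : deriv (fun u => φ ((1 - β) * y + β * φinv u)) =ᶠ[𝓝 z]
      fun w => deriv φ ((1 - β) * y + β * φinv w) * (β * (deriv φ (φinv w))⁻¹) := by
    filter_upwards [hD] with w hw' using hw'.2.deriv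
  -- derivative of φ_y near φinv z
  have haff : ∀ t : ℝ, HasDerivAt (fun s : ℝ => (1 - β) * y + β * s) β t := by
    intro t
    simpa using ((hasDerivAt_id t).const_mul β).const_add ((1 - β) * y)
  have hDφy : ∀ᶠ t in 𝓝 (φinv z), HasDerivAt (fun s => φ ((1 - β) * y + β * s))
      (deriv φ ((1 - β) * y + β * t) * β) t := by
    have hcnt : ContinuousAt (fun t : ℝ => (1 - β) * y + β * t) (φinv z) :=
      (continuousAt_const.add (continuousAt_const.mul continuousAt_id))
    have hmem : ∀ᶠ t in 𝓝 (φinv z), (1 - β) * y + β * t ∈ S := hcnt (hSopen.mem_nhds hw)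
    filter_upwards [hmem] with t ht
    exact ((hd1 _ ht).hasDerivAt).comp t (haff t)
  have hφy' : deriv (fun s => φ ((1 - β) * y + β * s)) (φinv z) =
      deriv φ ((1 - β) * y + β * φinv z) * β := hDφy.self_of_nhds.deriv
  have hφy'' : deriv (deriv (fun s => φ ((1 - β) * y + β * s))) (φinv z) =
      deriv (deriv φ) ((1 - β) * y + β * φinv z) * β * β := by
    have heq2 : deriv (fun s => φ ((1 - β) * y + β * s)) =ᶠ[𝓝 (φinv z)]
        fun t => deriv φ ((1 - β) * y + β * t) * β := by
      filter_upwards [hDφy] with t ht using ht.deriv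
    rw [heq2.deriv_eq]
    have h1 : HasDerivAt (fun t => deriv φ ((1 - β) * y + β * t))
        (deriv (deriv φ) ((1 - β) * y + β * φinv z) * β) (φinv z) :=
      by have := ((hd2 _ hw).hasDerivAt).comp (φinv z) (haff (φinv z)); exact this
    exact (h1.mul_const β).deriv
  -- second derivative of ψ at z
  have hinv_z : HasDerivAt φinv (deriv φ (φinv z))⁻¹ z := hD.self_of_nhds.1
  have hinnerz : HasDerivAt (fun w => (1 - β) * y + β * φinv w)
      (β * (deriv φ (φinv z))⁻¹) z :=
    (hinv_z.const_mul β).const_add ((1 - β) * y)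
  have hA : HasDerivAt (fun w => deriv φ ((1 - β) * y + β * φinv w))
      (deriv (deriv φ) ((1 - β) * y + β * φinv z) * (β * (deriv φ (φinv z))⁻¹)) z :=
    by have := ((hd2 _ hw).hasDerivAt).comp z hinnerz; exact this
  have hB : HasDerivAt (fun w => deriv φ (φinv w))
      (deriv (deriv φ) (φinv z) * (deriv φ (φinv z))⁻¹) z :=
    ((hd2 _ hx₀S).hasDerivAt).comp z hinv_z
  have hBinv : HasDerivAt (fun w => (deriv φ (φinv w))⁻¹)
      (-(deriv (deriv φ) (φinv z) * (deriv φ (φinv z))⁻¹) / (deriv φ (φinv z)) ^ 2) z :=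
    hB.inv (hne _ hx₀S)
  have hc : HasDerivAt
      (fun w => deriv φ ((1 - β) * y + β * φinv w) * (β * (deriv φ (φinv w))⁻¹))
      (deriv (deriv φ) ((1 - β) * y + β * φinv z) * (β * (deriv φ (φinv z))⁻¹) *
          (β * (deriv φ (φinv z))⁻¹) +
        deriv φ ((1 - β) * y + β * φinv z) *
          (β * (-(deriv (deriv φ) (φinv z) * (deriv φ (φinv z))⁻¹) / (deriv φ (φinv z)) ^ 2))) z :=
    hA.mul (hBinv.const_mul β)
  have hψ''z : deriv (deriv (fun u => φ ((1 - β) * y + β * φinv u))) z =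
      deriv (deriv φ) ((1 - β) * y + β * φinv z) * (β * (deriv φ (φinv z))⁻¹) *
          (β * (deriv φ (φinv z))⁻¹) +
        deriv φ ((1 - β) * y + β * φinv z) *
          (β * (-(deriv (deriv φ) (φinv z) * (deriv φ (φinv z))⁻¹) / (deriv φ (φinv z)) ^ 2)) := by
    rw [hψ'eq.deriv_eq]
    exact hc.deriv
  have hne1 : deriv φ (φinv z) ≠ 0 := hne _ hx₀S
  have hne2 : deriv φ ((1 - β) * y + β * φinv z) ≠ 0 := hne _ hw
  have hβne : β ≠ 0 := hβ0.ne'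
  have hsecond : deriv (deriv (fun w => φ ((1 - β) * y + β * φinv w))) z =
      deriv (fun w => φ ((1 - β) * y + β * w)) (φinv z) / (deriv φ (φinv z)) ^ 2 *
        (arrowPratt φ (φinv z) -
          arrowPratt (fun w => φ ((1 - β) * y + β * w)) (φinv z)) := by
    rw [hψ''z, arrowPratt, arrowPratt, hφy', hφy'']
    field_simp
    ring
  refine ⟨?_, hsecond, ?_, ?_⟩
  · rw [hD.self_of_nhds.2.deriv, hφy']
    field_simp
  · intro hle
    rw [hsecond]
    have hK : 0 < deriv (fun w => φ ((1 - β) * y + β * w)) (φinv z) / (deriv φ (φinv z)) ^ 2 := by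
      rw [hφy']
      exact div_pos (mul_pos (hpos _ hw) hβ0) (pow_pos (hpos _ hx₀S) 2)
    exact mul_nonneg hK.le (sub_nonneg.2 hle)
  · intro hle
    rw [hsecond]
    have hK : 0 < deriv (fun w => φ ((1 - β) * y + β * w)) (φinv z) / (deriv φ (φinv z)) ^ 2 := by
      rw [hφy']
      exact div_pos (mul_pos (hpos _ hw) hβ0) (pow_pos (hpos _ hx₀S) 2)
    exact mul_nonpos_of_nonneg_of_nonpos hK.le (sub_nonpos.2 hle)
end

section
/- Let α, ρ ∈ (0,1) with ρ ≤ α, and let β ∈ (0,1). For y ≥ 0 and z > 0 define ψ_y(z) = ((1-β)y + β z^{(1-ρ)/(1-α)})^{(1-α)/(1-ρ)}. Then the map z ↦ ψ_y(z) is Lipschitz on (0,∞) with constant β^{(1-α)/(1-ρ)} < 1, uniformly in y ≥ 0. -/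
/-- CRRA contraction bound: with `ρ ≤ α`, the map
`z ↦ ((1-β)y + β z^((1-ρ)/(1-α)))^((1-α)/(1-ρ))` is Lipschitz on `(0,∞)` with
constant `β^((1-α)/(1-ρ)) < 1`, uniformly in `y ≥ 0`. -/
theorem crra_psi_lipschitz
    (α ρ β : ℝ) (hα : α ∈ Set.Ioo (0:ℝ) 1) (hρ : ρ ∈ Set.Ioo (0:ℝ) 1)
    (hle : ρ ≤ α) (hβ : β ∈ Set.Ioo (0:ℝ) 1) :
    (∀ y : ℝ, 0 ≤ y → ∀ z₁ ∈ Set.Ioi (0:ℝ), ∀ z₂ ∈ Set.Ioi (0:ℝ),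
      |((1 - β) * y + β * z₁ ^ ((1 - ρ) / (1 - α))) ^ ((1 - α) / (1 - ρ)) -
          ((1 - β) * y + β * z₂ ^ ((1 - ρ) / (1 - α))) ^ ((1 - α) / (1 - ρ))| ≤
        β ^ ((1 - α) / (1 - ρ)) * |z₁ - z₂|) ∧
    β ^ ((1 - α) / (1 - ρ)) < 1 := by
  obtain ⟨hα0, hα1⟩ := hα
  obtain ⟨hρ0, hρ1⟩ := hρ
  obtain ⟨hβ0, hβ1⟩ := hβ
  have h1α : 0 < 1 - α := by linarith
  have h1ρ : 0 < 1 - ρ := by linarith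
  set q := (1 - α) / (1 - ρ) with hqdef
  set p := (1 - ρ) / (1 - α) with hpdef
  have hq0 : 0 < q := div_pos h1α h1ρ
  have hq1 : q ≤ 1 := by rw [hqdef, div_le_one h1ρ]; linarith
  have hp0 : 0 < p := div_pos h1ρ h1α
  have hpq : q * p = 1 := by rw [hqdef, hpdef]; field_simp
  refine ⟨?_, Real.rpow_lt_one (le_of_lt hβ0) hβ1 hq0⟩
  intro y hy z₁ hz₁ z₂ hz₂
  set a := (1 - β) * y with ha
  have ha0 : 0 ≤ a := mul_nonneg (by linarith) hy
  set f' : ℝ → ℝ := fun x => q * (a + β * x ^ p) ^ (q - 1) * (β * (p * x ^ (p - 1)))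
    with hf'
  have key : ∀ x ∈ Set.Ioi (0:ℝ),
      HasDerivWithinAt (fun z => (a + β * z ^ p) ^ q) (f' x) (Set.Ioi 0) x := by
    intro x hx
    have hx0 : 0 < x := hx
    have hg : HasDerivAt (fun z : ℝ => a + β * z ^ p) (β * (p * x ^ (p - 1))) x := by
      have := (Real.hasDerivAt_rpow_const (x := x) (p := p) (Or.inl (ne_of_gt hx0)))
      exact ((this.const_mul β).const_add a)
    have hgpos : 0 < a + β * x ^ p := by
      have : 0 < β * x ^ p := mul_pos hβ0 (Real.rpow_pos_of_pos hx0 p)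
      linarith
    have houter : HasDerivAt (fun u : ℝ => u ^ q) (q * (a + β * x ^ p) ^ (q - 1))
        (a + β * x ^ p) :=
      Real.hasDerivAt_rpow_const (Or.inl (ne_of_gt hgpos))
    exact (houter.comp x hg).hasDerivWithinAt
  have bound : ∀ x ∈ Set.Ioi (0:ℝ), ‖f' x‖ ≤ β ^ q := by
    intro x hx
    have hx0 : 0 < x := hx
    have hxp : 0 < β * x ^ p := mul_pos hβ0 (Real.rpow_pos_of_pos hx0 p)
    have hgpos : 0 < a + β * x ^ p := by linarith
    have hmono : (a + β * x ^ p) ^ (q - 1) ≤ (β * x ^ p) ^ (q - 1) :=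
      Real.rpow_le_rpow_of_nonpos hxp (by linarith) (by linarith)
    have hsplit : (β * x ^ p) ^ (q - 1) = β ^ (q - 1) * x ^ (p * (q - 1)) := by
      rw [Real.mul_rpow (le_of_lt hβ0) (le_of_lt (Real.rpow_pos_of_pos hx0 p)),
        Real.rpow_mul (le_of_lt hx0)]
    have hf'nonneg : 0 ≤ f' x := by
      have := Real.rpow_nonneg (le_of_lt hgpos) (q - 1)
      have := Real.rpow_nonneg (le_of_lt hx0) (p - 1)
      positivity
    rw [Real.norm_eq_abs, abs_of_nonneg hf'nonneg]
    have hcalc : q * (β * x ^ p) ^ (q - 1) * (β * (p * x ^ (p - 1))) = β ^ q := by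
      rw [hsplit]
      have h1 : β ^ (q - 1) * β = β ^ q := by
        rw [← Real.rpow_add_one (ne_of_gt hβ0)]
        norm_num
      have h2 : x ^ (p * (q - 1)) * x ^ (p - 1) = 1 := by
        rw [← Real.rpow_add hx0]
        have : p * (q - 1) + (p - 1) = 0 := by
          have : p * q = 1 := by rw [mul_comm]; exact hpq
          nlinarith
        rw [this, Real.rpow_zero]
      calc q * (β ^ (q - 1) * x ^ (p * (q - 1))) * (β * (p * x ^ (p - 1)))
          = (q * p) * (β ^ (q - 1) * β) * (x ^ (p * (q - 1)) * x ^ (p - 1)) := by ring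
        _ = β ^ q := by rw [hpq, h1, h2]; ring
    calc f' x ≤ q * (β * x ^ p) ^ (q - 1) * (β * (p * x ^ (p - 1))) := by
          rw [hf']
          have hnn : 0 ≤ β * (p * x ^ (p - 1)) :=
            mul_nonneg (le_of_lt hβ0)
              (mul_nonneg (le_of_lt hp0) (Real.rpow_nonneg (le_of_lt hx0) _))
          exact mul_le_mul_of_nonneg_right
            (mul_le_mul_of_nonneg_left hmono (le_of_lt hq0)) hnn
      _ = β ^ q := hcalc
  have := (convex_Ioi (0:ℝ)).norm_image_sub_le_of_norm_hasDerivWithin_le key bound hz₂ hz₁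
  simpa [Real.norm_eq_abs] using this
end

section
/- Let α, ρ > 0 with α ≤ ρ and β ∈ (0,1). For y < ρ^{-1} and z < α^{-1}, define ψ_y(z) = α^{-1}(1 - ((1-β)(1-ρy) + β(1-αz)^{ρ/α})^{α/ρ}). Then 0 ≤ ψ_y'(z) ≤ β^{α/ρ} < 1 for all such (y,z), so z ↦ ψ_y(z) is a contraction with modulus β^{α/ρ} uniformly in y. -/
/-- CARA Epstein–Zin contraction bound: with `α ≤ ρ`, the derivative of
`ψ_y(z) = α⁻¹(1 - ((1-β)(1-ρy) + β(1-αz)^(ρ/α))^(α/ρ))` satisfies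
`0 ≤ ψ_y'(z) ≤ β^(α/ρ) < 1` for all `y < ρ⁻¹`, `z < α⁻¹`. -/
theorem cara_psi_contraction
    (α ρ β : ℝ) (hα : 0 < α) (hρ : 0 < ρ) (hle : α ≤ ρ)
    (hβ : β ∈ Set.Ioo (0:ℝ) 1) :
    (∀ y z : ℝ, y < ρ⁻¹ → z < α⁻¹ →
      0 ≤ deriv (fun w : ℝ =>
          α⁻¹ * (1 - ((1 - β) * (1 - ρ * y) + β * (1 - α * w) ^ (ρ / α)) ^ (α / ρ))) z ∧
      deriv (fun w : ℝ =>
          α⁻¹ * (1 - ((1 - β) * (1 - ρ * y) + β * (1 - α * w) ^ (ρ / α)) ^ (α / ρ))) z ≤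
        β ^ (α / ρ)) ∧
    β ^ (α / ρ) < 1 := by
  obtain ⟨hβ0, hβ1⟩ := hβ
  constructor
  · intro y z hy hz
    have hu : (0:ℝ) < 1 - α * z := by
      have : α * z < α * α⁻¹ := by exact mul_lt_mul_of_pos_left hz hα
      rw [mul_inv_cancel₀ hα.ne'] at this
      linarith
    have hAy : (0:ℝ) < (1 - β) * (1 - ρ * y) := by
      have : ρ * y < ρ * ρ⁻¹ := mul_lt_mul_of_pos_left hy hρ
      rw [mul_inv_cancel₀ hρ.ne'] at this
      have h1 : (0:ℝ) < 1 - ρ * y := by linarith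
      exact mul_pos (by linarith) h1
    have hup : (0:ℝ) < (1 - α * z) ^ (ρ / α) := Real.rpow_pos_of_pos hu _
    have hB : (0:ℝ) < (1 - β) * (1 - ρ * y) + β * (1 - α * z) ^ (ρ / α) := by
      have := mul_pos hβ0 hup
      linarith
    set u : ℝ := 1 - α * z with hudef
    set B : ℝ := (1 - β) * (1 - ρ * y) + β * u ^ (ρ / α) with hBdef
    -- derivative computation
    have h1 : HasDerivAt (fun w : ℝ => 1 - α * w) (-α) z := by
      simpa using ((hasDerivAt_id z).const_mul α).const_sub (1:ℝ)
    have h2 : HasDerivAt (fun w : ℝ => (1 - α * w) ^ (ρ / α))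
        (-α * (ρ / α) * u ^ (ρ / α - 1)) z := h1.rpow_const (Or.inl hu.ne')
    have h3 : HasDerivAt (fun w : ℝ => (1 - β) * (1 - ρ * y) + β * (1 - α * w) ^ (ρ / α))
        (β * (-α * (ρ / α) * u ^ (ρ / α - 1))) z :=
      (h2.const_mul β).const_add _
    have h4 : HasDerivAt (fun w : ℝ =>
        ((1 - β) * (1 - ρ * y) + β * (1 - α * w) ^ (ρ / α)) ^ (α / ρ))
        (β * (-α * (ρ / α) * u ^ (ρ / α - 1)) * (α / ρ) * B ^ (α / ρ - 1)) z :=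
      h3.rpow_const (Or.inl hB.ne')
    have h5 : HasDerivAt (fun w : ℝ =>
        α⁻¹ * (1 - ((1 - β) * (1 - ρ * y) + β * (1 - α * w) ^ (ρ / α)) ^ (α / ρ)))
        (β * B ^ (α / ρ - 1) * u ^ (ρ / α - 1)) z := by
      have := (h4.const_sub (1:ℝ)).const_mul α⁻¹
      refine this.congr_deriv ?_
      have key : α⁻¹ * α * (ρ / α) * (α / ρ) = 1 := by
        rw [inv_mul_cancel₀ hα.ne', one_mul, div_mul_div_comm, mul_comm ρ α,
          div_self (mul_pos hα hρ).ne']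
      linear_combination (β * B ^ (α / ρ - 1) * u ^ (ρ / α - 1)) * key
    have hD : deriv (fun w : ℝ =>
        α⁻¹ * (1 - ((1 - β) * (1 - ρ * y) + β * (1 - α * w) ^ (ρ / α)) ^ (α / ρ))) z
        = β * B ^ (α / ρ - 1) * u ^ (ρ / α - 1) := h5.deriv
    rw [hD]
    constructor
    · positivity
    · -- bound: B^(α/ρ-1) ≤ (β u^(ρ/α))^(α/ρ-1)
      have hexp : α / ρ - 1 ≤ 0 := by
        have : α / ρ ≤ 1 := (div_le_one hρ).mpr hle
        linarith
      have hkey : B ^ (α / ρ - 1) ≤ (β * u ^ (ρ / α)) ^ (α / ρ - 1) := by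
        refine Real.rpow_le_rpow_of_nonpos (mul_pos hβ0 hup) ?_ hexp
        nlinarith
      have hsplit : (β * u ^ (ρ / α)) ^ (α / ρ - 1)
          = β ^ (α / ρ - 1) * u ^ ((ρ / α) * (α / ρ - 1)) := by
        rw [Real.mul_rpow hβ0.le hup.le, ← Real.rpow_mul hu.le]
      have hexp2 : (ρ / α) * (α / ρ - 1) = 1 - ρ / α := by
        field_simp
      calc β * B ^ (α / ρ - 1) * u ^ (ρ / α - 1)
          ≤ β * ((β * u ^ (ρ / α)) ^ (α / ρ - 1)) * u ^ (ρ / α - 1) := by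
            have hupos : (0:ℝ) ≤ u ^ (ρ / α - 1) := (Real.rpow_pos_of_pos hu _).le
            nlinarith [mul_le_mul_of_nonneg_left hkey hβ0.le]
        _ = β * β ^ (α / ρ - 1) * (u ^ (1 - ρ / α) * u ^ (ρ / α - 1)) := by
            rw [hsplit, hexp2]; ring
        _ = β ^ (α / ρ) := by
            rw [← Real.rpow_add hu, show (1 - ρ / α) + (ρ / α - 1) = 0 by ring,
              Real.rpow_zero, mul_one,
              show α / ρ = 1 + (α / ρ - 1) by ring, Real.rpow_add hβ0, Real.rpow_one]
            ring_nf
  · exact Real.rpow_lt_one hβ0.le hβ1 (by positivity)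
end
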